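/- arXiv:1301.4359 — 2 statements merged into one kernel-verified Lean document; each statement's English description precedes it below -/
import Mathlib

section
/- For real b, c > 0 with b ≠ c, the series ∑_{n=0}^∞ ((1/2)_n / n!) · 1/((1 + n/b)(1 + n/c)) equals (π^{1/2} b c / (b - c)) · (Γ(c)/Γ(c + 1/2) − Γ(b)/Γ(b + 1/2)). -/
/-! Partial fractions turn the summand into `b c / (b - c)` times
`(1/2)ₙ / n! · (1 / (n + c) - 1 / (n + b))`. Since `1 / (n + s) = ∫₀¹ x ^ (n + s - 1) dx` and the
binomial series gives `∑ (a)ₙ / n! · xⁿ = (1 - x) ^ (-a)`, monotone convergence identifies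
`∑ (a)ₙ / n! / (n + s)` with the Beta integral `B(s, 1 - a) = Γ(s) Γ(1 - a) / Γ(s + 1 - a)`;
for `a = 1/2` this is `√π Γ(s) / Γ(s + 1/2)`. -/

open Real BigOperators

noncomputable def poch (a : ℝ) (n : ℕ) : ℝ := ∏ i ∈ Finset.range n, (a + i)

noncomputable def digamma (x : ℝ) : ℝ := deriv Real.Gamma x / Real.Gamma x

open MeasureTheory Set Filter Topology

lemma poch_nonneg {a : ℝ} (ha : 0 ≤ a) (n : ℕ) : 0 ≤ poch a n :=
  Finset.prod_nonneg fun i _ ↦ by positivity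

lemma poch_eq_ascPochhammer_eval (a : ℝ) (n : ℕ) : poch a n = (ascPochhammer ℝ n).eval a := by
  induction n with
  | zero => simp [poch]
  | succ n ih => rw [poch, Finset.prod_range_succ, ← poch, ih, ascPochhammer_succ_eval]

lemma choose_add_sub_one_eq_poch_div_factorial (a : ℝ) (n : ℕ) :
    Ring.choose (a + n - 1) n = poch a n / n.factorial := by
  rw [Ring.choose_eq_smul, Polynomial.descPochhammer_smeval_eq_ascPochhammer,
    Polynomial.ascPochhammer_smeval_eq_eval, poch_eq_ascPochhammer_eval, smul_eq_mul,
    div_eq_inv_mul]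
  ring_nf

lemma hasSum_poch_div_factorial_mul_pow (a : ℝ) {x : ℝ} (hx : |x| < 1) :
    HasSum (fun n ↦ poch a n / n.factorial * x ^ n) ((1 - x) ^ (-a)) := by
  have := (one_div_one_sub_rpow_hasFPowerSeriesOnBall_zero a).hasSum
    (y := x) (by simpa [enorm_eq_nnnorm, ← NNReal.coe_lt_coe] using hx)
  simp only [FormalMultilinearSeries.ofScalars_apply_eq, zero_add, smul_eq_mul,
    choose_add_sub_one_eq_poch_div_factorial] at this
  rwa [rpow_neg (by linarith [le_abs_self x]), ← one_div]

lemma ofReal_rpow_mul_one_sub_rpow_eqOn (α β : ℝ) :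
    EqOn (fun x : ℝ ↦ ((x ^ (α - 1) * (1 - x) ^ (β - 1) : ℝ) : ℂ))
      (fun x : ℝ ↦ (x : ℂ) ^ ((α : ℂ) - 1) * (1 - (x : ℂ)) ^ ((β : ℂ) - 1)) (uIcc 0 1) := by
  intro x hx
  rw [uIcc_of_le zero_le_one] at hx
  push_cast
  rw [Complex.ofReal_cpow hx.1, Complex.ofReal_cpow (sub_nonneg.2 hx.2)]
  push_cast
  rfl

lemma intervalIntegrable_rpow_mul_one_sub_rpow {α β : ℝ} (hα : 0 < α) (hβ : 0 < β) :
    IntervalIntegrable (fun x : ℝ ↦ x ^ (α - 1) * (1 - x) ^ (β - 1)) volume 0 1 := by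
  have h := (Complex.betaIntegral_convergent (u := α) (v := β) (by simpa) (by simpa)).congr
    ((ofReal_rpow_mul_one_sub_rpow_eqOn α β).mono uIoc_subset_uIcc).symm
  rw [intervalIntegrable_iff] at h ⊢
  simpa [IntegrableOn] using h.re

lemma integral_rpow_mul_one_sub_rpow {α β : ℝ} (hα : 0 < α) (hβ : 0 < β) :
    ∫ x in (0 : ℝ)..1, x ^ (α - 1) * (1 - x) ^ (β - 1) = Gamma α * Gamma β / Gamma (α + β) := by
  have h := Complex.betaIntegral_eq_Gamma_mul_div α β (by simpa) (by simpa)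
  rw [Complex.betaIntegral,
    ← intervalIntegral.integral_congr (ofReal_rpow_mul_one_sub_rpow_eqOn α β),
    intervalIntegral.integral_ofReal, ← Complex.ofReal_add, Complex.Gamma_ofReal,
    Complex.Gamma_ofReal, Complex.Gamma_ofReal] at h
  exact_mod_cast h

lemma integrableOn_Ioo_rpow {r : ℝ} (hr : -1 < r) :
    IntegrableOn (fun x : ℝ ↦ x ^ r) (Ioo 0 1) :=
  (intervalIntegral.intervalIntegrable_rpow' hr).1.mono_set Ioo_subset_Ioc_self

lemma setIntegral_Ioo_rpow {r : ℝ} (hr : -1 < r) : ∫ x in Ioo (0 : ℝ) 1, x ^ r = 1 / (r + 1) := by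
  rw [← integral_Ioc_eq_integral_Ioo, ← intervalIntegral.integral_of_le zero_le_one,
    integral_rpow (Or.inl hr), one_rpow, zero_rpow (by linarith)]
  ring

theorem hasSum_poch_div_factorial_div_add {a s : ℝ} (ha₀ : 0 ≤ a) (ha₁ : a < 1) (hs : 0 < s) :
    HasSum (fun n : ℕ ↦ poch a n / n.factorial / (n + s))
      (Gamma s * Gamma (1 - a) / Gamma (s + (1 - a))) := by
  set c : ℕ → ℝ := fun n ↦ poch a n / n.factorial
  have hc : ∀ n, 0 ≤ c n := fun n ↦ div_nonneg (poch_nonneg ha₀ n) n.factorial.cast_nonneg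
  have hexp : ∀ n : ℕ, -1 < (n : ℝ) + s - 1 := fun n ↦ by linarith [n.cast_nonneg (α := ℝ)]
  let f : ℕ → ℝ → ℝ := fun N x ↦ ∑ n ∈ Finset.range N, c n * x ^ ((n : ℝ) + s - 1)
  have hterm_int : ∀ n, IntegrableOn (fun x : ℝ ↦ c n * x ^ ((n : ℝ) + s - 1)) (Ioo 0 1) :=
    fun n ↦ (integrableOn_Ioo_rpow (hexp n)).const_mul (c n)
  have hf_int : ∀ N, Integrable (f N) (volume.restrict (Ioo 0 1)) := fun N ↦
    integrable_finsetSum _ fun n _ ↦ hterm_int n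
  have hf_integral : ∀ N, ∫ x in Ioo 0 1, f N x = ∑ n ∈ Finset.range N, c n / (n + s) := by
    intro N
    rw [integral_finsetSum _ fun n _ ↦ hterm_int n]
    refine Finset.sum_congr rfl fun n _ ↦ ?_
    rw [integral_const_mul, setIntegral_Ioo_rpow (hexp n)]
    ring_nf
  have hF_int : IntegrableOn (fun x : ℝ ↦ x ^ (s - 1) * (1 - x) ^ (1 - a - 1)) (Ioo 0 1) :=
    ((intervalIntegrable_rpow_mul_one_sub_rpow hs (by linarith)).1).mono_set Ioo_subset_Ioc_self
  have hF_integral : ∫ x in Ioo 0 1, x ^ (s - 1) * (1 - x) ^ (1 - a - 1) =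
      Gamma s * Gamma (1 - a) / Gamma (s + (1 - a)) := by
    rw [← integral_Ioc_eq_integral_Ioo, ← intervalIntegral.integral_of_le zero_le_one,
      integral_rpow_mul_one_sub_rpow hs (by linarith)]
  have hmono : ∀ x ∈ Ioo (0 : ℝ) 1, Monotone fun N ↦ f N x := fun x hx ↦
    monotone_nat_of_le_succ fun N ↦ by
      simp only [f, Finset.sum_range_succ]
      exact le_add_of_nonneg_right (mul_nonneg (hc N) (rpow_nonneg hx.1.le _))
  have hlim : ∀ x ∈ Ioo (0 : ℝ) 1, Tendsto (fun N ↦ f N x) atTop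
      (𝓝 (x ^ (s - 1) * (1 - x) ^ (1 - a - 1))) := by
    intro x hx
    have h := (hasSum_poch_div_factorial_mul_pow a (abs_lt.2 ⟨by linarith [hx.1], hx.2⟩)).mul_left
      (x ^ (s - 1))
    convert h.tendsto_sum_nat using 2 with N
    · refine Finset.sum_congr rfl fun n _ ↦ ?_
      rw [rpow_sub_one hx.1.ne', rpow_add hx.1, rpow_natCast, rpow_sub_one hx.1.ne']
      ring
    · ring_nf
  rw [hasSum_iff_tendsto_nat_of_nonneg (fun n ↦ div_nonneg (hc n) (by positivity)), ← hF_integral]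
  simp_rw [← hf_integral]
  exact integral_tendsto_of_tendsto_of_monotone hf_int hF_int
    (ae_restrict_of_forall_mem measurableSet_Ioo hmono)
    (ae_restrict_of_forall_mem measurableSet_Ioo hlim)

theorem stmt4 (b c : ℝ) (hb : 0 < b) (hc : 0 < c) (hbc : b ≠ c) :
    ∑' n : ℕ, (poch (1/2) n / n.factorial) * (1 / ((1 + n / b) * (1 + n / c))) =
      Real.sqrt π * b * c / (b - c) *
        (Real.Gamma c / Real.Gamma (c + 1/2) - Real.Gamma b / Real.Gamma (b + 1/2)) := by
  have hsum : ∀ s > 0, HasSum (fun n : ℕ ↦ poch (1/2) n / n.factorial / (n + s))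
      (Real.sqrt π * Gamma s / Gamma (s + 1/2)) := fun s hs ↦ by
    convert hasSum_poch_div_factorial_div_add (a := 1/2) (by norm_num) (by norm_num) hs using 1
    norm_num [Gamma_one_half_eq]
    ring
  have hpartial : ∀ n : ℕ, poch (1/2) n / n.factorial * (1 / ((1 + n / b) * (1 + n / c))) =
      b * c / (b - c) * (poch (1/2) n / n.factorial / (n + c) -
        poch (1/2) n / n.factorial / (n + b)) := fun n ↦ by
    have : (n : ℝ) + b ≠ 0 := by positivity
    have : (n : ℝ) + c ≠ 0 := by positivity
    field_simp [sub_ne_zero.2 hbc]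
    ring
  rw [tsum_congr hpartial, (((hsum c hc).sub (hsum b hb)).mul_left _).tsum_eq]
  ring
end

section
/- The series ∑_{n=0}^∞ ((1/2)_n / n!)^2 · 1/((n+1)(n+2)(n+3)) equals 128/(225π). -/
open Real BigOperators

/-!
Gosper's algorithm finds a closed form for the partial sums: with `c N = ((1/2)_N / N!)^2`,
`∑_{n<N} c n / ((n+1)(n+2)(n+3)) = c N · N (128N³ + 800N² + 1604N + 1068) / (225 (N+1)(N+2)(N+3))`,
which is checked by telescoping using `c (N+1) / c N = ((2N+1)/(2N+2))²`. Moreover `c N (2N+1)` is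
the reciprocal of the `N`-th Wallis product, so it tends to `2/π`, and the rational factor
tends to `64/225` after dividing by `2N+1`.
-/

open Filter Finset Topology

lemma poch_succ (a : ℝ) (n : ℕ) : poch a (n + 1) = poch a n * (a + n) :=
  prod_range_succ _ _

lemma poch_div_factorial_succ (a : ℝ) (n : ℕ) :
    poch a (n + 1) / (n + 1).factorial = poch a n / n.factorial * ((a + n) / (n + 1)) := by
  rw [poch_succ, Nat.factorial_succ]
  push_cast
  field_simp

noncomputable def halfPochSq (n : ℕ) : ℝ := (poch (1/2) n / n.factorial) ^ 2

lemma halfPochSq_succ (n : ℕ) :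
    halfPochSq (n + 1) = halfPochSq n * ((2 * n + 1) / (2 * n + 2)) ^ 2 := by
  rw [halfPochSq, halfPochSq, poch_div_factorial_succ]
  field_simp
  ring

lemma halfPochSq_mul_wallis (n : ℕ) : halfPochSq n * (2 * n + 1) * Wallis.W n = 1 := by
  induction n with
  | zero => simp [halfPochSq, poch, Wallis.W]
  | succ n ih =>
    rw [halfPochSq_succ, Wallis.W_succ]
    push_cast
    field_simp
    linear_combination (2 * (n : ℝ) + 3) * ih

lemma tendsto_halfPochSq_mul :
    Tendsto (fun n : ℕ => halfPochSq n * (2 * n + 1)) atTop (𝓝 (2 / π)) := by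
  have hW := Wallis.tendsto_W_nhds_pi_div_two.inv₀ (by positivity)
  rw [inv_div] at hW
  refine hW.congr fun n => ?_
  rw [eq_comm, ← mul_eq_one_iff_eq_inv₀ (Wallis.W_pos n).ne']
  exact halfPochSq_mul_wallis n

noncomputable def partialSumClosedForm (N : ℕ) : ℝ :=
  halfPochSq N * (N * (128 * N ^ 3 + 800 * N ^ 2 + 1604 * N + 1068)) /
    (225 * ((N : ℝ) + 1) * (N + 2) * (N + 3))

lemma sum_range_eq_partialSumClosedForm (N : ℕ) :
    ∑ n ∈ range N, halfPochSq n * (1 / (((n : ℝ) + 1) * (n + 2) * (n + 3))) =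
      partialSumClosedForm N := by
  induction N with
  | zero => simp [partialSumClosedForm]
  | succ N ih =>
    rw [sum_range_succ, ih, partialSumClosedForm, partialSumClosedForm, halfPochSq_succ]
    push_cast
    field_simp
    ring

noncomputable def rationalFactor (x : ℝ) : ℝ :=
  4 * (32 + 200 * x + 401 * x ^ 2 + 267 * x ^ 3) /
    (225 * (1 + x) * (1 + 2 * x) * (1 + 3 * x) * (2 + x))

lemma partialSumClosedForm_eq (N : ℕ) (hN : N ≠ 0) :
    partialSumClosedForm N = halfPochSq N * (2 * N + 1) * rationalFactor (1 / N) := by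
  have hN' : (N : ℝ) ≠ 0 := Nat.cast_ne_zero.2 hN
  rw [partialSumClosedForm, rationalFactor]
  field_simp
  ring

lemma tendsto_rationalFactor_one_div :
    Tendsto (fun n : ℕ => rationalFactor (1 / n)) atTop (𝓝 (64 / 225)) := by
  have hcont : ContinuousAt rationalFactor 0 :=
    ContinuousAt.div (by fun_prop) (by fun_prop) (by norm_num)
  have h0 : rationalFactor 0 = 64 / 225 := by norm_num [rationalFactor]
  rw [← h0]
  exact hcont.tendsto.comp tendsto_one_div_atTop_nhds_zero_nat

lemma tendsto_partialSumClosedForm :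
    Tendsto partialSumClosedForm atTop (𝓝 (128 / (225 * π))) := by
  have h := tendsto_halfPochSq_mul.mul tendsto_rationalFactor_one_div
  rw [show 2 / π * (64 / 225) = 128 / (225 * π) by field_simp; ring] at h
  refine h.congr' ?_
  filter_upwards [eventually_ne_atTop 0] with N hN
  exact (partialSumClosedForm_eq N hN).symm

theorem stmt10 :
    ∑' n : ℕ, (poch (1/2) n / n.factorial) ^ 2 *
        (1 / (((n : ℝ) + 1) * ((n : ℝ) + 2) * ((n : ℝ) + 3))) =
      128 / (225 * π) := by
  have hsum : HasSum (fun n : ℕ => halfPochSq n * (1 / (((n : ℝ) + 1) * (n + 2) * (n + 3))))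
      (128 / (225 * π)) := by
    rw [hasSum_iff_tendsto_nat_of_nonneg (fun n => by unfold halfPochSq; positivity)]
    simpa only [sum_range_eq_partialSumClosedForm] using tendsto_partialSumClosedForm
  exact hsum.tsum_eq
end
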